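/- If M(i,j) holds and k is a call position with i < k < j, then k is a matched call and its matching return l satisfies k < l < j; dually, if k is a return position with i < k < j, then k is a matched return and its matching call c satisfies i < c < k. -/

import Mathlib

/-- A matching on the interval `[1,n]`: a binary relation `M` together with unary
predicates `call` and `ret` satisfying the nested-word matching axioms. -/
def IsMatching (n : ℕ) (M : ℕ → ℕ → Prop) (call ret : ℕ → Prop) : Prop :=
  (∀ i j, M i j → 1 ≤ i ∧ j ≤ n) ∧
  (∀ i, call i → 1 ≤ i ∧ i ≤ n) ∧
  (∀ j, ret j → 1 ≤ j ∧ j ≤ n) ∧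
  (∀ i j, M i j → call i ∧ ret j ∧ i < j) ∧
  (∀ i j j', M i j → M i j' → j = j') ∧
  (∀ i i' j, M i j → M i' j → i = i') ∧
  (∀ i j, i ≤ j → call i → ret j → ∃ k, i ≤ k ∧ k ≤ j ∧ (M i k ∨ M k j))

/-! Covering axiom (3) applied to `[k, j]` (resp. `[i, k]`) produces a partner for `k` inside
the pair `(i, j)`; the other alternative, and a partner at the endpoint itself, would give
`i` or `j` a second partner. -/

namespace IsMatching

variable {n : ℕ} {M : ℕ → ℕ → Prop} {call ret : ℕ → Prop}

theorem lt_of_rel (hm : IsMatching n M call ret) {i j : ℕ} (h : M i j) : i < j :=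
  (hm.2.2.2.1 i j h).2.2

theorem call_of_rel (hm : IsMatching n M call ret) {i j : ℕ} (h : M i j) : call i :=
  (hm.2.2.2.1 i j h).1

theorem ret_of_rel (hm : IsMatching n M call ret) {i j : ℕ} (h : M i j) : ret j :=
  (hm.2.2.2.1 i j h).2.1

theorem right_unique (hm : IsMatching n M call ret) {i j j' : ℕ} (h : M i j) (h' : M i j') :
    j = j' :=
  hm.2.2.2.2.1 i j j' h h'

theorem left_unique (hm : IsMatching n M call ret) {i i' j : ℕ} (h : M i j) (h' : M i' j) :
    i = i' :=
  hm.2.2.2.2.2.1 i i' j h h'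

theorem exists_rel_of_call_of_ret (hm : IsMatching n M call ret) {i j : ℕ} (hij : i ≤ j)
    (hi : call i) (hj : ret j) : ∃ k, i ≤ k ∧ k ≤ j ∧ (M i k ∨ M k j) :=
  hm.2.2.2.2.2.2 i j hij hi hj

theorem exists_rel_of_call_mem_Ioo (hm : IsMatching n M call ret) {i j k : ℕ} (hij : M i j)
    (hk : call k) (hik : i < k) (hkj : k < j) : ∃ l, M k l ∧ k < l ∧ l < j := by
  obtain ⟨l, hkl, hlj, hkl' | hlj'⟩ :=
    hm.exists_rel_of_call_of_ret hkj.le hk (hm.ret_of_rel hij)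
  · refine ⟨l, hkl', hm.lt_of_rel hkl', hlj.lt_of_ne ?_⟩
    rintro rfl
    exact hik.ne (hm.left_unique hij hkl')
  · exact absurd (hm.left_unique hij hlj') (hik.trans_le hkl).ne

theorem exists_rel_of_ret_mem_Ioo (hm : IsMatching n M call ret) {i j k : ℕ} (hij : M i j)
    (hk : ret k) (hik : i < k) (hkj : k < j) : ∃ c, M c k ∧ i < c ∧ c < k := by
  obtain ⟨c, hic, hck, hic' | hck'⟩ :=
    hm.exists_rel_of_call_of_ret hik.le (hm.call_of_rel hij) hk
  · exact absurd (hm.right_unique hij hic') (hck.trans_lt hkj).ne'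
  · refine ⟨c, hck', hic.lt_of_ne ?_, hm.lt_of_rel hck'⟩
    rintro rfl
    exact hkj.ne' (hm.right_unique hij hck')

end IsMatching

/-- Calls strictly inside a matched pair are matched inside it, and dually for returns. -/
theorem inside_matched {n : ℕ} {M : ℕ → ℕ → Prop} {call ret : ℕ → Prop}
    (hm : IsMatching n M call ret) {i j : ℕ} (hij : M i j) :
    (∀ k, call k → i < k → k < j → ∃ l, M k l ∧ k < l ∧ l < j) ∧
    (∀ k, ret k → i < k → k < j → ∃ c, M c k ∧ i < c ∧ c < k) :=
  ⟨fun _ hk hik hkj => hm.exists_rel_of_call_mem_Ioo hij hk hik hkj,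
    fun _ hk hik hkj => hm.exists_rel_of_ret_mem_Ioo hij hk hik hkj⟩
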